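/- Let p be a prime, k ≥ 1, G a group, K a normal subgroup of G such that the quotient G/K is finite abelian, and ψ : G → (ℤ/p^kℤ)ˣ a group homomorphism that is trivial on K and whose composition with the reduction map (ℤ/p^kℤ)ˣ → (ℤ/pℤ)ˣ is a nontrivial character of G. Then the restriction map H¹(G, (ℤ/p^kℤ)(ψ)) → H¹(K, ℤ/p^kℤ) = Hom(K, ℤ/p^kℤ) is injective. -/
import Mathlib


/-- Injectivity of the restriction map `H¹(G, (ℤ/p^kℤ)(ψ)) → Hom(K, ℤ/p^kℤ)`, stated
concretely: every 1-cocycle `F : G → ℤ/p^kℤ` for the action `g · m = ψ(g)·m` whose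
restriction to `K` (a homomorphism, since `ψ` is trivial on `K`) vanishes is a
1-coboundary `g ↦ ψ(g)·c − c`. -/
theorem stmt_15 (p : ℕ) (hp : p.Prime) (k : ℕ) (hk : 1 ≤ k)
    {G : Type*} [Group G] (K : Subgroup G) [K.Normal]
    [Finite (G ⧸ K)] (habel : ∀ a b : G ⧸ K, a * b = b * a)
    (ψ : G →* (ZMod (p ^ k))ˣ)
    (hψK : ∀ x ∈ K, ψ x = 1)
    (hψ1 : (Units.map (ZMod.castHom (dvd_pow_self p (by omega : k ≠ 0))
      (ZMod p)).toMonoidHom).comp ψ ≠ 1) :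
    ∀ F : G → ZMod (p ^ k),
      (∀ g h : G, F (g * h) = (ψ g : ZMod (p ^ k)) * F h + F g) →
      (∀ x : G, x ∈ K → F x = 0) →
      ∃ c : ZMod (p ^ k), ∀ g : G, F g = (ψ g : ZMod (p ^ k)) * c - c := by
  intro F hF hFK
  have hpk : 0 < p ^ k := pow_pos hp.pos k
  haveI : NeZero (p ^ k) := ⟨hpk.ne'⟩
  haveI : NeZero p := ⟨hp.pos.ne'⟩
  -- find g₀ with ψ(g₀) ≠ 1 mod p
  obtain ⟨g₀, hg₀⟩ : ∃ g : G, (ZMod.castHom (dvd_pow_self p (by omega : k ≠ 0))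
      (ZMod p)) ((ψ g : ZMod (p ^ k))) ≠ 1 := by
    by_contra h
    push_neg at h
    exact hψ1 (MonoidHom.ext fun g => Units.ext (by simpa using h g))
  set a : ZMod (p ^ k) := (ψ g₀ : ZMod (p ^ k)) - 1 with ha
  have hcast : (ZMod.castHom (dvd_pow_self p (by omega : k ≠ 0)) (ZMod p)) a ≠ 0 := by
    rw [ha, map_sub, map_one]
    exact sub_ne_zero.mpr hg₀
  -- a is a unit since its reduction mod p is nonzero
  have hnd : ¬ p ∣ a.val := by
    intro hd
    apply hcast
    have : ((a.val : ℕ) : ZMod p) = 0 := (ZMod.natCast_eq_zero_iff _ _).mpr hd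
    rw [ZMod.natCast_val] at this
    rw [ZMod.castHom_apply]
    exact this
  have hu : IsUnit a := by
    have h1 : IsUnit ((a.val : ZMod (p ^ k))) := by
      rw [ZMod.isUnit_iff_coprime]
      exact Nat.Coprime.pow_right k (hp.coprime_iff_not_dvd.mpr hnd).symm
    rwa [ZMod.natCast_val, ZMod.cast_id] at h1
  set e : ZMod (p ^ k) := ((hu.unit⁻¹ : (ZMod (p ^ k))ˣ) : ZMod (p ^ k)) with he
  have h2 : e * a = 1 := hu.val_inv_mul
  refine ⟨e * F g₀, fun g => ?_⟩
  -- commutation up to K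
  have hx : (g₀ * g)⁻¹ * (g * g₀) ∈ K := by
    have hq : ((g₀ * g : G) : G ⧸ K) = ((g * g₀ : G) : G ⧸ K) := by
      simpa using habel (↑g₀) (↑g)
    exact QuotientGroup.eq.mp hq
  have e1 : F (g * g₀) = (ψ g : ZMod (p ^ k)) * F g₀ + F g := hF g g₀
  have e2 : F (g * g₀) = (ψ g₀ : ZMod (p ^ k)) * F g + F g₀ := by
    have hrw : g * g₀ = (g₀ * g) * ((g₀ * g)⁻¹ * (g * g₀)) := by group
    rw [hrw, hF, hFK _ hx, mul_zero, zero_add, hF g₀ g]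
  have h3 : a * F g = ((ψ g : ZMod (p ^ k)) - 1) * F g₀ := by
    rw [ha]; linear_combination e1 - e2
  have h4 : F g = ((ψ g : ZMod (p ^ k)) - 1) * (e * F g₀) := by
    calc F g = 1 * F g := (one_mul _).symm
      _ = (e * a) * F g := by rw [h2]
      _ = e * (a * F g) := mul_assoc _ _ _
      _ = e * (((ψ g : ZMod (p ^ k)) - 1) * F g₀) := by rw [h3]
      _ = ((ψ g : ZMod (p ^ k)) - 1) * (e * F g₀) := by ring
  rw [h4]; ring
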